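/- arXiv:1802.05616 — 3 statements merged into one kernel-verified Lean document; each statement's English description precedes it below -/
import Mathlib

section
/- SIC inference is not complete for disjunction: there exist formulas A, B : ℤ × Unit → Prop (e.g., A (x,_) := x < 0 and B (x,_) := x ≥ 0) such that the only SIC of A w.r.t. x and of B w.r.t. x is (pointwise equivalent to) False, yet True is a SIC (indeed the WIC) of the disjunction fun (x, v) => A (x,v) ∨ B (x,v). -/
/-- Sufficient independence condition of `Φ` with respect to `X`. -/
def IsSIC {X V : Type*} (Φ : X × V → Prop) (Ψ : V → Prop) : Prop :=
  ∀ v, Ψ v → ∀ x y, Φ (x, v) ↔ Φ (y, v)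

theorem IsSIC.not_apply {X V : Type*} {Φ : X × V → Prop} {Ψ : V → Prop} (h : IsSIC Φ Ψ)
    {v : V} {x y : X} (hx : Φ (x, v)) (hy : ¬ Φ (y, v)) : ¬ Ψ v :=
  fun hv => hy ((h v hv x y).mp hx)

theorem isSIC_true_of_forall {X V : Type*} {Φ : X × V → Prop} (hΦ : ∀ p, Φ p) :
    IsSIC Φ fun _ => True :=
  fun _ _ _ _ => iff_of_true (hΦ _) (hΦ _)

/-- SIC inference is not complete for disjunction. -/
theorem sic_incomplete_disjunction :
    (∀ Ψ : Unit → Prop,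
      (∀ v, Ψ v → ∀ x y : ℤ, ((fun p : ℤ × Unit => p.1 < 0) (x, v) ↔
        (fun p : ℤ × Unit => p.1 < 0) (y, v))) → ∀ v, ¬ Ψ v) ∧
    (∀ Ψ : Unit → Prop,
      (∀ v, Ψ v → ∀ x y : ℤ, ((fun p : ℤ × Unit => p.1 ≥ 0) (x, v) ↔
        (fun p : ℤ × Unit => p.1 ≥ 0) (y, v))) → ∀ v, ¬ Ψ v) ∧
    (∀ v : Unit, (fun _ : Unit => True) v →
      ∀ x y : ℤ, ((fun p : ℤ × Unit => p.1 < 0 ∨ p.1 ≥ 0) (x, v) ↔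
        (fun p : ℤ × Unit => p.1 < 0 ∨ p.1 ≥ 0) (y, v))) :=
  ⟨fun _ h _ => IsSIC.not_apply (Φ := fun p : ℤ × Unit => p.1 < 0) h
      (x := -1) (y := 0) (by norm_num) (by norm_num),
    fun _ h _ => IsSIC.not_apply (Φ := fun p : ℤ × Unit => p.1 ≥ 0) h
      (x := 0) (y := -1) (by norm_num) (by norm_num),
    isSIC_true_of_forall fun p => lt_or_ge p.1 0⟩
end

section
/- SIC rule for if-then-else: let C : X × 𝕍 → Prop, and A, B : X × 𝕍 → V be terms, with tC a SIC for the formula C, and tA, tB SICs for the terms A, B, all w.r.t. X. Then Ψ v := (tC v ∧ ((∀ x, C (x, v)) → tA v) ∧ ((∀ x, ¬ C (x, v)) → tB v)) ∨ (tA v ∧ tB v ∧ ∀ x, A (x, v) = B (x, v)) is a SIC for the term fun (x, v) => if C (x, v) then A (x, v) else B (x, v) (using classical choice for the if), w.r.t. X. -/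
section

variable {X V : Type*} {p : X → Prop} [DecidablePred p] {a b : X → V}

theorem ite_eq_ite_of_forall_iff (hp : ∀ x y, p x ↔ p y)
    (ha : (∀ x, p x) → ∀ x y, a x = a y) (hb : (∀ x, ¬ p x) → ∀ x y, b x = b y) (x y : X) :
    (if p x then a x else b x) = (if p y then a y else b y) := by
  by_cases hx : p x
  · have hall : ∀ z, p z := fun z => (hp x z).1 hx
    rw [if_pos hx, if_pos (hall y)]
    exact ha hall x y
  · have hnone : ∀ z, ¬ p z := fun z hz => hx ((hp z x).1 hz)
    rw [if_neg hx, if_neg (hnone y)]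
    exact hb hnone x y

theorem ite_eq_ite_of_branches_eq (ha : ∀ x y, a x = a y) (hab : ∀ x, a x = b x) (x y : X) :
    (if p x then a x else b x) = (if p y then a y else b y) := by
  rw [← hab x, ← hab y, ite_self, ite_self]
  exact ha x y

end

open Classical in
/-- SIC rule for if-then-else. -/
theorem sic_ite {X 𝕍 V : Type*} (C : X × 𝕍 → Prop) (A B : X × 𝕍 → V)
    (tC tA tB : 𝕍 → Prop)
    (hC : ∀ v, tC v → ∀ x y : X, C (x, v) ↔ C (y, v))
    (hA : ∀ v, tA v → ∀ x y : X, A (x, v) = A (y, v))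
    (hB : ∀ v, tB v → ∀ x y : X, B (x, v) = B (y, v)) :
    ∀ v, ((tC v ∧ ((∀ x, C (x, v)) → tA v) ∧ ((∀ x, ¬ C (x, v)) → tB v)) ∨
          (tA v ∧ tB v ∧ ∀ x, A (x, v) = B (x, v))) →
      ∀ x y : X,
        (if C (x, v) then A (x, v) else B (x, v)) =
        (if C (y, v) then A (y, v) else B (y, v)) := by
  rintro v (⟨htC, hCA, hCB⟩ | ⟨htA, -, hAB⟩)
  · exact ite_eq_ite_of_forall_iff (hC v htC) (fun h => hA v (hCA h)) (fun h => hB v (hCB h))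
  · exact ite_eq_ite_of_branches_eq (hA v htA) hAB
end

section
/- SIC rule for left shift: let A : X × 𝕍 → BitVec n and B : X × 𝕍 → ℕ be terms, and tB a SIC for B w.r.t. X. Then Ψ v := tB v ∧ (∀ x, B (x, v) ≥ n) is a SIC for the term fun (x, v) => A (x, v) <<< B (x, v) w.r.t. X: shifting any n-bit vector by at least n positions yields the zero bitvector, so the result is independent of A and of X. -/
theorem sic_shiftLeft_general {X 𝕍 : Type*} {n : ℕ}
    (A : X × 𝕍 → BitVec n) (B : X × 𝕍 → ℕ) (tB : 𝕍 → Prop) :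
    ∀ v, (tB v ∧ ∀ x, B (x, v) ≥ n) →
      ∀ x y : X, A (x, v) <<< B (x, v) = A (y, v) <<< B (y, v) := by
  rintro v ⟨-, hge⟩ x y
  rw [BitVec.shiftLeft_eq_zero (hge x), BitVec.shiftLeft_eq_zero (hge y)]

/-- SIC rule for left shift on fixed-size bitvectors. -/
theorem sic_shiftLeft {X 𝕍 : Type*} {n : ℕ}
    (A : X × 𝕍 → BitVec n) (B : X × 𝕍 → ℕ) (tB : 𝕍 → Prop)
    (hB : ∀ v, tB v → ∀ x y : X, B (x, v) = B (y, v)) :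
    ∀ v, (tB v ∧ ∀ x, B (x, v) ≥ n) →
      ∀ x y : X, A (x, v) <<< B (x, v) = A (y, v) <<< B (y, v) :=
  sic_shiftLeft_general A B tB
end
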